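/- arXiv:0806.1948 — 2 statements merged into one kernel-verified Lean document; each statement's English description precedes it below -/
import Mathlib

section
/- Let X = (X_1,...,X_T) be jointly distributed random variables over [M_1]×···×[M_T] such that the conditional collision probability cp(X_i|X_{<i}) ≤ α_i/M_i for every i ∈ [T]. Then the Hellinger closeness to uniform satisfies C(X) ≥ √(1/(α_1 ··· α_T)). -/
/-!
For an arbitrary nonnegative `p` on `∏ᵢ βᵢ` with total mass `S`, write `γᵢ` for `S` times the
conditional collision probability of the `i`-th coordinate. Then
`S ^ (T + 1) ≤ (∑ₓ √(p x)) ^ 2 * ∏ᵢ γᵢ`, by induction on `T`: conditioning on the first coordinate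
`v`, with fibre masses `Sᵥ`, gives `γ₀ = ∑ᵥ Sᵥ² / S` and `γᵢ₊₁(p) = ∑ᵥ γᵢ(p(v, ·))`, and the
inductive hypotheses for the fibres `p(v, ·)` combine through Hölder's inequality for `T + 3`
functions with equal exponents. For a probability distribution this reads
`1 ≤ (∑ₓ √(p x)) ^ 2 * ∏ᵢ αᵢ / M`, which is the claim.
-/

open Finset MeasureTheory

theorem Real.sum_prod_rpow_le_prod_sum_rpow {ι τ : Type*} [Fintype ι] (s : Finset τ)
    {f : τ → ι → ℝ} (hf : ∀ t ∈ s, ∀ v, 0 ≤ f t v) {w : τ → ℝ} (hw : ∀ t ∈ s, 0 ≤ w t)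
    (hw1 : ∑ t ∈ s, w t = 1) :
    ∑ v, ∏ t ∈ s, f t v ^ w t ≤ ∏ t ∈ s, (∑ v, f t v) ^ w t := by
  let _ : MeasurableSpace ι := ⊤
  have h := ENNReal.lintegral_prod_norm_pow_le (μ := Measure.count) s
    (f := fun t v => ENNReal.ofReal (f t v))
    (fun _ _ => (measurable_of_countable _).aemeasurable) hw1 hw
  simp only [lintegral_count, tsum_fintype] at h
  have hsum : ∀ t ∈ s, 0 ≤ ∑ v, f t v := fun t ht => sum_nonneg fun v _ => hf t ht v
  rw [← ENNReal.ofReal_le_ofReal_iff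
    (prod_nonneg fun t ht => Real.rpow_nonneg (hsum t ht) _)]
  convert h using 1
  · rw [ENNReal.ofReal_sum_of_nonneg fun v _ =>
      prod_nonneg fun t ht => Real.rpow_nonneg (hf t ht v) _]
    refine sum_congr rfl fun v _ => ?_
    rw [ENNReal.ofReal_prod_of_nonneg fun t ht => Real.rpow_nonneg (hf t ht v) _]
    exact prod_congr rfl fun t ht => (ENNReal.ofReal_rpow_of_nonneg (hf t ht v) (hw t ht)).symm
  · rw [ENNReal.ofReal_prod_of_nonneg fun t ht => Real.rpow_nonneg (hsum t ht) _]
    refine prod_congr rfl fun t ht => ?_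
    rw [← ENNReal.ofReal_rpow_of_nonneg (hsum t ht) (hw t ht),
      ENNReal.ofReal_sum_of_nonneg fun v _ => hf t ht v]

theorem Real.sum_pow_card_le_prod_sum {ι τ : Type*} [Fintype ι] [Fintype τ] [Nonempty τ]
    {f : τ → ι → ℝ} (hf : ∀ t v, 0 ≤ f t v) {q : ι → ℝ} (hq : ∀ v, 0 ≤ q v)
    (hqf : ∀ v, q v ^ Fintype.card τ ≤ ∏ t, f t v) :
    (∑ v, q v) ^ Fintype.card τ ≤ ∏ t, ∑ v, f t v := by
  set m := Fintype.card τ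
  have hm : m ≠ 0 := Fintype.card_ne_zero
  have hw : 0 ≤ (m : ℝ)⁻¹ := by positivity
  have hroot : ∑ v, q v ≤ ∏ t, (∑ v, f t v) ^ (m : ℝ)⁻¹ := calc
    ∑ v, q v ≤ ∑ v, ∏ t, f t v ^ (m : ℝ)⁻¹ := sum_le_sum fun v _ => by
        rw [Real.finsetProd_rpow _ _ fun t _ => hf t v, ← Real.pow_rpow_inv_natCast (hq v) hm]
        exact Real.rpow_le_rpow (pow_nonneg (hq v) m) (hqf v) hw
    _ ≤ ∏ t, (∑ v, f t v) ^ (m : ℝ)⁻¹ :=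
        Real.sum_prod_rpow_le_prod_sum_rpow univ (fun t _ => hf t) (fun _ _ => hw)
          (by simp [m, hm])
  calc (∑ v, q v) ^ m ≤ (∏ t, (∑ v, f t v) ^ (m : ℝ)⁻¹) ^ m :=
        pow_le_pow_left₀ (sum_nonneg fun v _ => hq v) hroot m
    _ = ∏ t, ∑ v, f t v := by
        rw [← prod_pow]
        exact prod_congr rfl fun t _ =>
          Real.rpow_inv_natCast_pow (sum_nonneg fun v _ => hf t v) hm

theorem sum_pow_add_three_le {ι : Type*} [Fintype ι] {k : ℕ} {q H : ι → ℝ} {G : ι → Fin k → ℝ}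
    (hq : ∀ v, 0 ≤ q v) (hH : ∀ v, 0 ≤ H v) (hG : ∀ v j, 0 ≤ G v j)
    (hqHG : ∀ v, q v ^ (k + 1) ≤ H v ^ 2 * ∏ j, G v j) :
    (∑ v, q v) ^ (k + 3) ≤ (∑ v, H v) ^ 2 * (∑ v, q v ^ 2) * ∏ j, ∑ v, G v j := by
  let f : Fin (k + 3) → ι → ℝ :=
    Fin.cons H (Fin.cons H (Fin.cons (fun v => q v ^ 2) fun j v => G v j))
  have hf : ∀ t v, 0 ≤ f t v := by
    intro t v
    refine Fin.cases (hH v) (Fin.cases (hH v) (Fin.cases (sq_nonneg _) fun j => hG v j)) t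
  have h := Real.sum_pow_card_le_prod_sum (f := f) hf hq fun v => by
    simp only [Fintype.card_fin, Fin.prod_univ_succ, f, Fin.cons_zero, Fin.cons_succ]
    calc q v ^ (k + 3) = q v ^ (k + 1) * q v ^ 2 := by ring
      _ ≤ H v ^ 2 * (∏ j, G v j) * q v ^ 2 := by gcongr; exact hqHG v
      _ = _ := by ring
  simp only [Fintype.card_fin, Fin.prod_univ_succ, f, Fin.cons_zero, Fin.cons_succ] at h
  exact h.trans_eq (by ring)

section PrefixMass
variable {T : ℕ} {β : Fin T → Type*} [∀ i, Fintype (β i)] [∀ i, DecidableEq (β i)]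

noncomputable def prefixMass (p : (∀ i, β i) → ℝ) (i : Fin T) (x : ∀ i, β i) : ℝ :=
  ∑ y, if (∀ j, j < i → y j = x j) then p y else 0

noncomputable def prefixMassAt (p : (∀ i, β i) → ℝ) (i : Fin T) (x : ∀ i, β i) (v : β i) : ℝ :=
  ∑ y, if (∀ j, j < i → y j = x j) ∧ y i = v then p y else 0

/-- For `X ∼ p / ∑ p` this is `(∑ p) * cp(X_i | X_{<i})`; being homogeneous of degree one in `p`, it
splits as a sum over the fibres of the first coordinate (`condCollisionProb_succ`). -/
noncomputable def condCollisionProb (p : (∀ i, β i) → ℝ) (i : Fin T) : ℝ :=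
  ∑ x, p x * ((∑ v, prefixMassAt p i x v ^ 2) / prefixMass p i x ^ 2)

theorem condCollisionProb_nonneg {p : (∀ i, β i) → ℝ} (hp : ∀ x, 0 ≤ p x) (i : Fin T) :
    0 ≤ condCollisionProb p i :=
  sum_nonneg fun x _ => mul_nonneg (hp x) (by positivity)

end PrefixMass

theorem Fintype.sum_pi_fin_succ {T : ℕ} {β : Fin (T + 1) → Type*} [∀ i, Fintype (β i)]
    {M : Type*} [AddCommMonoid M] (f : (∀ i, β i) → M) :
    ∑ x, f x = ∑ v : β 0, ∑ u : ∀ i : Fin T, β i.succ, f (Fin.cons v u) := by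
  rw [← (Fin.consEquiv β).sum_comp f, Fintype.sum_prod_type]
  rfl

theorem Fin.cons_eq_cons_below_succ_iff {T : ℕ} {β : Fin (T + 1) → Type*} {i : Fin T}
    {v w : β 0} {u y : ∀ i : Fin T, β i.succ} :
    (∀ j, j < i.succ → (Fin.cons w u : ∀ i, β i) j = Fin.cons v y j) ↔
      w = v ∧ ∀ k, k < i → u k = y k := by
  constructor
  · intro h
    exact ⟨by simpa using h 0 (Fin.succ_pos i),
      fun k hk => by simpa using h k.succ (Fin.succ_lt_succ_iff.2 hk)⟩
  · rintro ⟨rfl, h⟩ j hj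
    induction j using Fin.cases with
    | zero => rfl
    | succ k => simpa using h k (Fin.succ_lt_succ_iff.1 hj)

section FirstCoordinate
variable {T : ℕ} {β : Fin (T + 1) → Type*} [∀ i, Fintype (β i)] [∀ i, DecidableEq (β i)]
  (p : (∀ i, β i) → ℝ)

theorem prefixMass_zero (x : ∀ i, β i) : prefixMass p 0 x = ∑ y, p y := by
  simp [prefixMass]

theorem prefixMassAt_zero (x : ∀ i, β i) (v : β 0) :
    prefixMassAt p 0 x v = ∑ u : ∀ i : Fin T, β i.succ, p (Fin.cons v u) := by
  simp [prefixMassAt, Fintype.sum_pi_fin_succ (β := β)]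

theorem prefixMass_succ (i : Fin T) (v : β 0) (y : ∀ i : Fin T, β i.succ) :
    prefixMass p i.succ (Fin.cons v y) = prefixMass (fun u => p (Fin.cons v u)) i y := by
  simp [prefixMass, Fintype.sum_pi_fin_succ (β := β), Fin.cons_eq_cons_below_succ_iff, ite_and]

theorem prefixMassAt_succ (i : Fin T) (v : β 0) (y : ∀ i : Fin T, β i.succ) (w : β i.succ) :
    prefixMassAt p i.succ (Fin.cons v y) w = prefixMassAt (fun u => p (Fin.cons v u)) i y w := by
  simp [prefixMassAt, Fintype.sum_pi_fin_succ (β := β), Fin.cons_eq_cons_below_succ_iff, ite_and]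

theorem condCollisionProb_zero :
    condCollisionProb p 0 =
      (∑ v : β 0, (∑ u : ∀ i : Fin T, β i.succ, p (Fin.cons v u)) ^ 2) / ∑ x, p x := by
  simp only [condCollisionProb, prefixMass_zero, prefixMassAt_zero, ← sum_mul]
  rcases eq_or_ne (∑ x, p x) 0 with h | h
  · simp [h]
  · field_simp

theorem condCollisionProb_succ (i : Fin T) :
    condCollisionProb p i.succ = ∑ v : β 0, condCollisionProb (fun u => p (Fin.cons v u)) i := by
  simp only [condCollisionProb, Fintype.sum_pi_fin_succ (β := β) (fun x => p x * _),
    prefixMass_succ, prefixMassAt_succ]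

end FirstCoordinate

theorem sum_pow_le_sq_sum_sqrt_mul_prod_condCollisionProb : ∀ {T : ℕ} {β : Fin T → Type*}
    [∀ i, Fintype (β i)] [∀ i, DecidableEq (β i)] {p : (∀ i, β i) → ℝ}, (∀ x, 0 ≤ p x) →
    (∑ x, p x) ^ (T + 1) ≤ (∑ x, √(p x)) ^ 2 * ∏ i, condCollisionProb p i
  | 0, β, _, _, p, hp => by
    rw [Fin.prod_univ_zero, mul_one, pow_one]
    calc ∑ x, p x = ∑ x, √(p x) ^ 2 := sum_congr rfl fun x _ => (Real.sq_sqrt (hp x)).symm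
      _ ≤ (∑ x, √(p x)) ^ 2 := sum_sq_le_sq_sum_of_nonneg fun x _ => Real.sqrt_nonneg _
  | T + 1, β, _, _, p, hp => by
    rcases (sum_nonneg fun x _ => hp x).eq_or_lt with hS | hS
    · rw [← hS, zero_pow (Nat.succ_ne_zero _)]
      exact mul_nonneg (sq_nonneg _) (prod_nonneg fun i _ => condCollisionProb_nonneg hp i)
    have hfiber := sum_pow_add_three_le
      (q := fun v => ∑ u : ∀ i : Fin T, β i.succ, p (Fin.cons v u))
      (H := fun v => ∑ u : ∀ i : Fin T, β i.succ, √(p (Fin.cons v u)))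
      (G := fun v j => condCollisionProb (fun u => p (Fin.cons v u)) j)
      (fun v => sum_nonneg fun u _ => hp _) (fun v => sum_nonneg fun u _ => Real.sqrt_nonneg _)
      (fun v j => condCollisionProb_nonneg (fun u => hp _) j)
      (fun v => sum_pow_le_sq_sum_sqrt_mul_prod_condCollisionProb fun u => hp _)
    rw [← Fintype.sum_pi_fin_succ p, ← Fintype.sum_pi_fin_succ fun x => √(p x)] at hfiber
    refine le_of_mul_le_mul_right ?_ hS
    calc (∑ x, p x) ^ (T + 1 + 1) * ∑ x, p x = (∑ x, p x) ^ (T + 3) := by ring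
      _ ≤ _ := hfiber
      _ = _ := by
        rw [Fin.prod_univ_succ, condCollisionProb_zero]
        simp only [condCollisionProb_succ]
        field_simp

theorem Real.sqrt_one_div_le_div_sqrt {s A M : ℝ} (hs : 0 ≤ s) (hM : 0 ≤ M)
    (h : 1 ≤ s ^ 2 * (A / M)) : √(1 / A) ≤ s / √M := by
  have hAM : 0 < A / M := pos_of_mul_pos_right (one_pos.trans_le h) (sq_nonneg s)
  obtain ⟨hA, hM⟩ : 0 < A ∧ 0 < M :=
    (div_pos_iff.1 hAM).resolve_right fun hneg => hM.not_gt hneg.2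
  rw [← mul_div_assoc, le_div_iff₀ hM, one_mul] at h
  rw [← Real.sqrt_sq hs, ← Real.sqrt_div' _ hM.le]
  exact Real.sqrt_le_sqrt ((div_le_div_iff₀ hA hM).2 (by linarith))

theorem one_div_mul_sum_sqrt_mul {ι : Type*} [Fintype ι] {M : ℝ} (hM : 0 ≤ M) (p : ι → ℝ) :
    1 / M * ∑ x, √(M * p x) = (∑ x, √(p x)) / √M := by
  simp only [Real.sqrt_mul hM, ← mul_sum]
  rcases hM.eq_or_lt with rfl | hM
  · simp
  · field_simp
    rw [Real.sq_sqrt hM.le]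

/-- If `cp(X_i | X_{<i}) ≤ α_i / M_i` for all `i`, then the
Hellinger closeness to uniform of the joint distribution is at least
`√(1/(α_1 ⋯ α_T))`. -/
theorem stmt6 {T : ℕ} (β : Fin T → Type) [∀ i, Fintype (β i)]
    [∀ i, DecidableEq (β i)]
    (p : (∀ i, β i) → ℝ) (hp0 : ∀ x, 0 ≤ p x) (hp1 : ∑ x, p x = 1)
    (α : Fin T → ℝ)
    -- `margLt i x` = Pr[X_{<i} = x_{<i}]
    (margLt : Fin T → (∀ i, β i) → ℝ)
    (hmargLt : ∀ i x, margLt i x =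
      ∑ y, if (∀ j, j < i → y j = x j) then p y else 0)
    -- `margLeVal i x v` = Pr[X_{<i} = x_{<i} ∧ X_i = v]
    (margLeVal : (i : Fin T) → (∀ j, β j) → β i → ℝ)
    (hmargLeVal : ∀ i x v, margLeVal i x v =
      ∑ y, if (∀ j, j < i → y j = x j) ∧ y i = v then p y else 0)
    -- `cp(X_i | X_{<i}) = E_{x ← X}[cp(X_i | X_{<i}=x_{<i})] ≤ α i / M_i`
    (hcond : ∀ i, ∑ x, p x *
        ((∑ v, (margLeVal i x v) ^ 2) / (margLt i x) ^ 2)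
      ≤ α i / Fintype.card (β i)) :
    Real.sqrt (1 / ∏ i, α i) ≤
      (1 / Fintype.card (∀ i, β i) : ℝ) *
        ∑ x, Real.sqrt (Fintype.card (∀ i, β i) * p x) := by
  have hcp : ∀ i, condCollisionProb p i ≤ α i / Fintype.card (β i) := fun i => by
    simpa only [condCollisionProb, prefixMass, prefixMassAt, hmargLt, hmargLeVal] using hcond i
  have hcard : (Fintype.card (∀ i, β i) : ℝ) = ∏ i, (Fintype.card (β i) : ℝ) := by
    simp [Fintype.card_pi]
  have hbound : 1 ≤ (∑ x, √(p x)) ^ 2 * ((∏ i, α i) / Fintype.card (∀ i, β i)) := calc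
    1 = (∑ x, p x) ^ (T + 1) := by rw [hp1, one_pow]
    _ ≤ (∑ x, √(p x)) ^ 2 * ∏ i, condCollisionProb p i :=
        sum_pow_le_sq_sum_sqrt_mul_prod_condCollisionProb hp0
    _ ≤ (∑ x, √(p x)) ^ 2 * ∏ i, α i / Fintype.card (β i) := by
        gcongr
        · exact fun i _ => condCollisionProb_nonneg hp0 i
        · exact hcp i
    _ = (∑ x, √(p x)) ^ 2 * ((∏ i, α i) / Fintype.card (∀ i, β i)) := by
        rw [hcard, prod_div_distrib]
  rw [one_div_mul_sum_sqrt_mul (Nat.cast_nonneg _)]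
  exact Real.sqrt_one_div_le_div_sqrt (sum_nonneg fun x _ => Real.sqrt_nonneg _)
    (Nat.cast_nonneg _) hbound
end

section
/- Let H:[N]→[M] be a uniformly random hash function from a 2-universal family 𝓗 and X = (X_1,...,X_T) a block K-source over [N]^T, independent of H. Set Y_i = H(X_i). Then cp(H) = 1/|𝓗| and for every i ∈ [T], the conditional collision probability satisfies cp(Y_i | H, Y_{<i}) ≤ 1/M + 1/K. -/
/-!
Write `cp(A | B) = ∑_b Pr[B = b] · cp(A | B = b)`. Conditioning on a function of `B` can only
lower this quantity (Cauchy–Schwarz in Sedrakyan's form), and `(H, Y_{<i})` is a function of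
`(H, X_{<i})`, so `cp(Y_i | H, Y_{<i}) ≤ cp(H(X_i) | H, X_{<i})`. For a fixed prefix `x_{<i}`,
averaging over `H` the collision probability of `H(X_i)` counts the pairs `(u, u')` with
`H u = H u'`: the diagonal gives `cp(X_i | X_{<i} = x_{<i}) ≤ 1/K` and, by 2-universality, the
off-diagonal pairs give at most `1/M`.
-/

open Finset

noncomputable def jointMass {α β γ : Type*} [Fintype α] [DecidableEq β] [DecidableEq γ]
    (w : α → ℝ) (f : α → β) (g : α → γ) (b : β) (c : γ) : ℝ :=
  ∑ a with f a = b ∧ g a = c, w a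

noncomputable def cpGiven {β γ : Type*} [Fintype γ] (J : β → γ → ℝ) (b : β) : ℝ :=
  (∑ c, J b c ^ 2) / (∑ c, J b c) ^ 2

noncomputable def condCollision {β γ : Type*} [Fintype β] [Fintype γ] (J : β → γ → ℝ) :
    ℝ :=
  ∑ b, (∑ c, J b c) * cpGiven J b

section CondCollision

variable {α α' β β' γ γ' ι : Type*}

lemma condCollision_eq_sum_div [Fintype β] [Fintype γ] (J : β → γ → ℝ) :
    condCollision J = ∑ b, (∑ c, J b c ^ 2) / ∑ c, J b c := by
  refine sum_congr rfl fun b _ => ?_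
  rcases eq_or_ne (∑ c, J b c) 0 with hm | hm
  · simp [cpGiven, hm]
  · rw [cpGiven]
    field_simp

lemma condCollision_prod [Fintype ι] [Fintype β] [Fintype γ] (r : ι → ℝ)
    (J : ι → β → γ → ℝ) :
    condCollision (fun (z : ι × β) c => r z.1 * J z.1 z.2 c) =
      ∑ i, r i * condCollision (J i) := by
  simp only [condCollision_eq_sum_div, Fintype.sum_prod_type, mul_sum]
  refine sum_congr rfl fun i _ => sum_congr rfl fun b _ => ?_
  rcases eq_or_ne (r i) 0 with hr | hr
  · simp [hr]
  · simp only [mul_pow, ← mul_sum]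
    rw [sq, mul_assoc, mul_div_mul_left _ _ hr, mul_div_assoc]

lemma Finset.sq_sum_div_le_sum_sq_div_of_nonneg (s : Finset ι) {f g : ι → ℝ}
    (hg : ∀ i ∈ s, 0 ≤ g i) (hfg : ∀ i ∈ s, g i = 0 → f i = 0) :
    (∑ i ∈ s, f i) ^ 2 / ∑ i ∈ s, g i ≤ ∑ i ∈ s, f i ^ 2 / g i := by
  have hratio : ∀ i ∈ s, 0 ≤ f i ^ 2 / g i := fun i hi => div_nonneg (sq_nonneg _) (hg i hi)
  refine div_le_of_le_mul₀ (sum_nonneg hg) (sum_nonneg hratio)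
    (sum_sq_le_sum_mul_sum_of_sq_le_mul _ hratio hg fun i hi => ?_)
  rcases eq_or_ne (g i) 0 with hgi | hgi
  · simp [hfg i hi hgi]
  · rw [div_mul_cancel₀ _ hgi]

lemma condCollision_coarsen_le [Fintype β] [Fintype β'] [Fintype γ] [DecidableEq β']
    {J : β → γ → ℝ} (hJ : ∀ b c, 0 ≤ J b c) (φ : β → β') :
    condCollision (fun b' c => ∑ b with φ b = b', J b c) ≤ condCollision J := by
  have hJm : ∀ b c, J b c ≤ ∑ c, J b c := fun b c =>
    single_le_sum (fun c _ => hJ b c) (mem_univ c)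
  simp only [condCollision_eq_sum_div, sum_div]
  calc ∑ b', ∑ c, (∑ b with φ b = b', J b c) ^ 2 / ∑ c, ∑ b with φ b = b', J b c
      = ∑ b', ∑ c, (∑ b with φ b = b', J b c) ^ 2 / ∑ b with φ b = b', ∑ c, J b c := by
        simp_rw [sum_comm (s := univ (α := γ))]
    _ ≤ ∑ b', ∑ c, ∑ b with φ b = b', J b c ^ 2 / ∑ c, J b c := by
        refine sum_le_sum fun b' _ => sum_le_sum fun c _ => ?_
        refine sq_sum_div_le_sum_sq_div_of_nonneg _ (fun b _ => sum_nonneg fun c _ => hJ b c)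
          fun b _ hb => le_antisymm (hb ▸ hJm b c) (hJ b c)
    _ = ∑ b, ∑ c, J b c ^ 2 / ∑ c, J b c := by
        rw [sum_comm, ← sum_fiberwise univ φ]
        simp_rw [sum_comm (s := univ (α := γ))]

variable [Fintype α] [DecidableEq β] [DecidableEq γ]

lemma jointMass_nonneg {w : α → ℝ} (hw : ∀ a, 0 ≤ w a) (f : α → β) (g : α → γ) (b : β)
    (c : γ) : 0 ≤ jointMass w f g b c :=
  sum_nonneg fun a _ => hw a

lemma sum_jointMass_right [Fintype γ] (w : α → ℝ) (f : α → β) (g : α → γ) (b : β) :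
    ∑ c, jointMass w f g b c = ∑ a with f a = b, w a := by
  simp only [jointMass, sum_filter, ite_and]
  rw [sum_comm]
  refine sum_congr rfl fun a _ => ?_
  split_ifs <;> simp

lemma sum_jointMass [Fintype β] [Fintype γ] (w : α → ℝ) (f : α → β) (g : α → γ) :
    ∑ b, ∑ c, jointMass w f g b c = ∑ a, w a := by
  simp_rw [sum_jointMass_right]
  exact sum_fiberwise univ f w

lemma sum_mul_cpGiven_jointMass [Fintype β] [Fintype γ] (w : α → ℝ) (f : α → β)
    (g : α → γ) :
    ∑ a, w a * cpGiven (jointMass w f g) (f a) = condCollision (jointMass w f g) := by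
  rw [← sum_fiberwise univ f]
  refine sum_congr rfl fun b _ => ?_
  rw [sum_jointMass_right, sum_mul]
  exact sum_congr rfl fun a ha => by rw [(mem_filter.1 ha).2]

lemma condCollision_jointMass_le [Fintype β] [Fintype γ] {w : α → ℝ} (hw : ∀ a, 0 ≤ w a)
    (f : α → β) (g : α → γ) {κ : ℝ}
    (h : ∀ a, ∑ c, jointMass w f g (f a) c ≠ 0 → cpGiven (jointMass w f g) (f a) ≤ κ) :
    condCollision (jointMass w f g) ≤ κ * ∑ a, w a := by
  rw [← sum_mul_cpGiven_jointMass, mul_sum]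
  refine sum_le_sum fun a _ => ?_
  rcases eq_or_lt_of_le (hw a) with hwa | hwa
  · simp [← hwa]
  have hmass : w a ≤ ∑ c, jointMass w f g (f a) c := by
    rw [sum_jointMass_right]
    exact single_le_sum (fun a _ => hw a) (mem_filter.2 ⟨mem_univ a, rfl⟩)
  rw [mul_comm κ]
  exact mul_le_mul_of_nonneg_left (h a (hwa.trans_le hmass).ne') hwa.le

lemma jointMass_comp_left [Fintype β] [DecidableEq β'] (w : α → ℝ) (f : α → β) (g : α → γ)
    (φ : β → β') (b' : β') (c : γ) :
    jointMass w (fun a => φ (f a)) g b' c = ∑ b with φ b = b', jointMass w f g b c := by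
  simp only [jointMass, sum_filter, ite_and, ite_sum_zero]
  rw [sum_comm]
  refine sum_congr rfl fun a _ => ?_
  rw [sum_eq_single (f a) (fun b _ hb => by simp [Ne.symm hb]) (by simp)]
  simp

lemma jointMass_comp_right [Fintype γ] [DecidableEq γ'] (w : α → ℝ) (f : α → β) (g : α → γ)
    (ψ : γ → γ') (b : β) (c' : γ') :
    jointMass w f (fun a => ψ (g a)) b c' = ∑ c with ψ c = c', jointMass w f g b c := by
  simp only [jointMass, sum_filter, ite_and, ite_sum_zero]
  rw [sum_comm]
  refine sum_congr rfl fun a _ => ?_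
  rw [sum_eq_single (g a) (fun c _ hc => by simp [Ne.symm hc]) (by simp)]
  split_ifs <;> simp_all

lemma jointMass_map [Fintype α'] [DecidableEq α'] (w : α → ℝ) (π : α → α') (f : α' → β)
    (g : α' → γ) :
    jointMass (fun z => ∑ a with π a = z, w a) f g =
      jointMass w (fun a => f (π a)) (fun a => g (π a)) := by
  ext b c
  simp only [jointMass, sum_filter, ite_sum_zero]
  rw [sum_comm]
  refine sum_congr rfl fun a _ => ?_
  rw [sum_eq_single (π a) (fun z _ hz => by simp [Ne.symm hz]) (by simp)]
  simp

lemma jointMass_const_mul (r : ℝ) (w : α → ℝ) (f : α → β) (g : α → γ) :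
    jointMass (fun a => r * w a) f g = fun b c => r * jointMass w f g b c :=
  funext₂ fun _ _ => (mul_sum _ _ _).symm

lemma jointMass_prod_fst [Fintype ι] [DecidableEq ι] (w : ι × α → ℝ) (f : α → β)
    (g : ι × α → γ) (i : ι) (b : β) (c : γ) :
    jointMass w (fun z => (z.1, f z.2)) g (i, b) c =
      jointMass (fun a => w (i, a)) f (fun a => g (i, a)) b c := by
  simp [jointMass, sum_filter, Fintype.sum_prod_type, ite_and]

lemma jointMass_domRestrict_Iio {T : ℕ} {X : Type*} [Fintype X] [DecidableEq X]
    (w : (Fin T → X) → ℝ) (i : Fin T) (x : Fin T → X) (v : X) :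
    jointMass w (Set.Iio i).domRestrict (fun y => y i) ((Set.Iio i).domRestrict x) v =
      ∑ y, if (∀ j, j < i → y j = x j) ∧ y i = v then w y else 0 := by
  rw [jointMass, sum_filter]
  exact sum_congr rfl fun y _ =>
    if_congr (and_congr Set.domRestrict_eq_domRestrict_iff Iff.rfl) rfl rfl

lemma sum_jointMass_domRestrict_Iio {T : ℕ} {X : Type*} [Fintype X] [DecidableEq X]
    (w : (Fin T → X) → ℝ) (i : Fin T) (x : Fin T → X) :
    ∑ v, jointMass w (Set.Iio i).domRestrict (fun y => y i) ((Set.Iio i).domRestrict x) v =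
      ∑ y, if ∀ j, j < i → y j = x j then w y else 0 := by
  rw [sum_jointMass_right, sum_filter]
  exact sum_congr rfl fun y _ => if_congr Set.domRestrict_eq_domRestrict_iff rfl rfl

end CondCollision

section Hashing

variable {α β ι U V H : Type*} [Fintype U] [Fintype V] [DecidableEq V] [Fintype H]

lemma sum_sq_sum_fiber_eq (h : U → V) (m : U → ℝ) :
    ∑ v, (∑ u with h u = v, m u) ^ 2 = ∑ u, ∑ u', if h u = h u' then m u * m u' else 0 := by
  simp_rw [sq, sum_mul_sum, sum_filter]
  rw [sum_comm]
  simp only [sum_ite_eq, mem_univ, if_true]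
  exact sum_congr rfl fun u _ => sum_congr rfl fun u' _ => if_congr eq_comm rfl rfl

lemma sum_sum_sq_sum_fiber_le [Nonempty H] (hash : H → U → V) {δ : ℝ} (hδ : 0 ≤ δ)
    (huniv : ∀ u u', u ≠ u' →
      (∑ h, if hash h u = hash h u' then (1 : ℝ) else 0) / Fintype.card H ≤ δ)
    {m : U → ℝ} (hm : ∀ u, 0 ≤ m u) :
    ∑ h, ∑ v, (∑ u with hash h u = v, m u) ^ 2 ≤
      Fintype.card H * (∑ u, m u ^ 2 + δ * (∑ u, m u) ^ 2) := by
  classical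
  set n : ℝ := (Fintype.card H : ℝ)
  have hn : 0 < n := by positivity
  have hcoll : ∀ u u', (∑ h, if hash h u = hash h u' then (1 : ℝ) else 0) ≤
      (if u = u' then n else 0) + n * δ := by
    intro u u'
    rcases eq_or_ne u u' with rfl | hne
    · simp [n, mul_nonneg hn.le hδ]
    · simpa [hne, n, div_le_iff₀ hn, mul_comm] using huniv u u' hne
  calc ∑ h, ∑ v, (∑ u with hash h u = v, m u) ^ 2
      = ∑ u, ∑ u', m u * m u' * ∑ h, if hash h u = hash h u' then (1 : ℝ) else 0 := by
        simp_rw [sum_sq_sum_fiber_eq, mul_sum, mul_ite, mul_one, mul_zero]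
        rw [sum_comm]
        exact sum_congr rfl fun u _ => sum_comm
    _ ≤ ∑ u, ∑ u', m u * m u' * ((if u = u' then n else 0) + n * δ) := by
        gcongr with u _ u' _
        · exact mul_nonneg (hm u) (hm u')
        · exact hcoll u u'
    _ = n * (∑ u, m u ^ 2 + δ * (∑ u, m u) ^ 2) := by
        simp_rw [mul_add, sum_add_distrib, mul_ite, mul_zero, sum_ite_eq, mem_univ, if_true,
          sq, sum_mul_sum, mul_sum]
        congr 1 <;> refine sum_congr rfl fun u _ => ?_
        · ring
        · exact sum_congr rfl fun u' _ => by ring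

lemma sum_condCollision_hash_le [Fintype β] [Nonempty H] (hash : H → U → V) {δ : ℝ} (hδ : 0 ≤ δ)
    (huniv : ∀ u u', u ≠ u' →
      (∑ h, if hash h u = hash h u' then (1 : ℝ) else 0) / Fintype.card H ≤ δ)
    {J : β → U → ℝ} (hJ : ∀ b u, 0 ≤ J b u) :
    ∑ h, condCollision (fun b v => ∑ u with hash h u = v, J b u) ≤
      Fintype.card H * (condCollision J + δ * ∑ b, ∑ u, J b u) := by
  have hmass : ∀ h b, ∑ v, ∑ u with hash h u = v, J b u = ∑ u, J b u :=
    fun h b => sum_fiberwise univ (hash h) (J b)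
  simp only [condCollision_eq_sum_div, hmass]
  rw [sum_comm]
  simp_rw [← sum_div]
  calc ∑ b, (∑ h, ∑ v, (∑ u with hash h u = v, J b u) ^ 2) / ∑ u, J b u
      ≤ ∑ b, Fintype.card H * (∑ u, J b u ^ 2 + δ * (∑ u, J b u) ^ 2) / ∑ u, J b u := by
        gcongr with b
        · exact sum_nonneg fun u _ => hJ b u
        · exact sum_sum_sq_sum_fiber_le hash hδ huniv (hJ b)
    _ = Fintype.card H * (∑ b, (∑ u, J b u ^ 2) / ∑ u, J b u + δ * ∑ b, ∑ u, J b u) := by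
        simp_rw [mul_div_assoc]
        rw [← mul_sum, mul_sum _ _ δ, ← sum_add_distrib]
        congr 1
        refine sum_congr rfl fun b _ => ?_
        rw [add_div, mul_div_assoc, sq (∑ u, J b u), mul_self_div_self]

-- With `H` uniform and independent of `A ~ p`, this reads
-- `cp(H(g A) | H, H ∘ f A) ≤ cp(g A | f A) + δ`.
theorem condCollision_hash_le [Fintype α] [Fintype ι] [DecidableEq ι] [DecidableEq U]
    [DecidableEq H] [Nonempty H] (hash : H → U → V) {δ : ℝ} (hδ : 0 ≤ δ)
    (huniv : ∀ u u', u ≠ u' →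
      (∑ h, if hash h u = hash h u' then (1 : ℝ) else 0) / Fintype.card H ≤ δ)
    {p : α → ℝ} (hp : ∀ a, 0 ≤ p a) (f : α → ι → U) (g : α → U) :
    condCollision (jointMass (fun z : H × α => 1 / Fintype.card H * p z.2)
        (fun z => (z.1, fun j => hash z.1 (f z.2 j))) (fun z => hash z.1 (g z.2))) ≤
      condCollision (jointMass p f g) + δ * ∑ a, p a := by
  set w := fun z : H × α => 1 / (Fintype.card H : ℝ) * p z.2
  have hw : ∀ z, 0 ≤ w z := fun z => mul_nonneg (by positivity) (hp z.2)
  have hcard : (Fintype.card H : ℝ) ≠ 0 := by positivity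
  have hcoarse : jointMass w (fun z => (z.1, fun j => hash z.1 (f z.2 j)))
      (fun z => hash z.1 (g z.2)) = fun b' c => ∑ b with (b.1, fun j => hash b.1 (b.2 j)) = b',
        jointMass w (fun z => (z.1, f z.2)) (fun z => hash z.1 (g z.2)) b c :=
    funext₂ (jointMass_comp_left w (fun z => (z.1, f z.2)) (fun z => hash z.1 (g z.2))
      (fun b => (b.1, fun j => hash b.1 (b.2 j))))
  have hsplit : jointMass w (fun z => (z.1, f z.2)) (fun z => hash z.1 (g z.2)) =
      fun z c => 1 / Fintype.card H * jointMass p f (fun a => hash z.1 (g a)) z.2 c :=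
    funext₂ fun ⟨h, b⟩ c => by rw [jointMass_prod_fst, jointMass_const_mul]
  have hright : ∀ h, jointMass p f (fun a => hash h (g a)) =
      fun b v => ∑ u with hash h u = v, jointMass p f g b u :=
    fun h => funext₂ (jointMass_comp_right p f g (hash h))
  calc _ ≤ condCollision (jointMass w (fun z => (z.1, f z.2)) (fun z => hash z.1 (g z.2))) := by
        rw [hcoarse]
        exact condCollision_coarsen_le (jointMass_nonneg hw _ _) _
    _ = 1 / Fintype.card H * ∑ h, condCollision (jointMass p f (fun a => hash h (g a))) := by
        rw [hsplit, mul_sum]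
        exact condCollision_prod (fun _ => _) fun h => jointMass p f fun a => hash h (g a)
    _ ≤ 1 / Fintype.card H * (Fintype.card H *
          (condCollision (jointMass p f g) + δ * ∑ b, ∑ u, jointMass p f g b u)) := by
        simp_rw [hright]
        gcongr
        exact sum_condCollision_hash_le hash hδ huniv (jointMass_nonneg hp f g)
    _ = condCollision (jointMass p f g) + δ * ∑ a, p a := by
        rw [sum_jointMass, ← mul_assoc, one_div_mul_cancel hcard, one_mul]

theorem condCollision_hash_domRestrict_Iio_le {T : ℕ} [DecidableEq U] [DecidableEq H]
    [Nonempty H] (hash : H → U → V) {δ : ℝ} (hδ : 0 ≤ δ)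
    (huniv : ∀ u u', u ≠ u' →
      (∑ h, if hash h u = hash h u' then (1 : ℝ) else 0) / Fintype.card H ≤ δ)
    {p : (Fin T → U) → ℝ} (hp : ∀ x, 0 ≤ p x) (q : H × (Fin T → V) → ℝ)
    (hq : ∀ h y, q (h, y) = 1 / Fintype.card H *
      ∑ x, if ∀ k, hash h (x k) = y k then p x else 0) (i : Fin T) :
    condCollision (jointMass q (fun z => (z.1, (Set.Iio i).domRestrict z.2)) (fun z => z.2 i)) ≤
      condCollision (jointMass p (Set.Iio i).domRestrict (fun x => x i)) + δ * ∑ x, p x := by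
  have hq_map : q = fun z => ∑ a : H × (Fin T → U) with (a.1, fun k => hash a.1 (a.2 k)) = z,
      1 / (Fintype.card H : ℝ) * p a.2 := by
    funext ⟨h, y⟩
    rw [hq, mul_sum, sum_filter, Fintype.sum_prod_type]
    simp [Prod.ext_iff, funext_iff, ite_and]
  rw [hq_map, jointMass_map]
  exact condCollision_hash_le hash hδ huniv hp (Set.Iio i).domRestrict fun x => x i

end Hashing

theorem stmt9_general {N M T : ℕ} {Hfam : Type} [Fintype Hfam] [Nonempty Hfam]
    (hash : Hfam → Fin N → Fin M)
    (huniv : ∀ x x' : Fin N, x ≠ x' →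
      (∑ hh : Hfam, if hash hh x = hash hh x' then (1 : ℝ) else 0)
        / Fintype.card Hfam ≤ 1 / M)
    (p : (Fin T → Fin N) → ℝ) (hp0 : ∀ x, 0 ≤ p x) (hp1 : ∑ x, p x = 1)
    (K : ℝ)
    -- `margLt i x` = Pr[X_{<i} = x_{<i}]
    (margLt : Fin T → (Fin T → Fin N) → ℝ)
    (hmargLt : ∀ i x, margLt i x =
      ∑ y, if (∀ j, j < i → y j = x j) then p y else 0)
    -- `margLeVal i x v` = Pr[X_{<i} = x_{<i} ∧ X_i = v]
    (margLeVal : Fin T → (Fin T → Fin N) → Fin N → ℝ)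
    (hmargLeVal : ∀ i x v, margLeVal i x v =
      ∑ y, if (∀ j, j < i → y j = x j) ∧ y i = v then p y else 0)
    -- block `K`-source
    (hblock : ∀ i x, margLt i x ≠ 0 →
      (∑ v, (margLeVal i x v) ^ 2) / (margLt i x) ^ 2 ≤ 1 / K)
    -- joint distribution of `(H, Y_1, ..., Y_T)`
    (q : Hfam × (Fin T → Fin M) → ℝ)
    (hq : ∀ hh y, q (hh, y) = (1 / Fintype.card Hfam : ℝ) *
      ∑ x, if (∀ i, hash hh (x i) = y i) then p x else 0)
    -- `qLt i hh y` = Pr[H = hh ∧ Y_{<i} = y_{<i}]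
    (qLt : Fin T → Hfam → (Fin T → Fin M) → ℝ)
    (hqLt : ∀ i hh y, qLt i hh y =
      ∑ y', if (∀ j, j < i → y' j = y j) then q (hh, y') else 0)
    -- `qLeVal i hh y v` = Pr[H = hh ∧ Y_{<i} = y_{<i} ∧ Y_i = v]
    (qLeVal : Fin T → Hfam → (Fin T → Fin M) → Fin M → ℝ)
    (hqLeVal : ∀ i hh y v, qLeVal i hh y v =
      ∑ y', if (∀ j, j < i → y' j = y j) ∧ y' i = v then q (hh, y') else 0) :
    (∑ hh : Hfam, (∑ y, q (hh, y)) ^ 2 = 1 / Fintype.card Hfam) ∧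
    ∀ i, ∑ z : Hfam × (Fin T → Fin M),
        q z * ((∑ v, (qLeVal i z.1 z.2 v) ^ 2) / (qLt i z.1 z.2) ^ 2)
      ≤ 1 / M + 1 / K := by
  classical
  refine ⟨?_, fun i => ?_⟩
  · have hmass : ∀ hh, ∑ y, q (hh, y) = 1 / Fintype.card Hfam := fun hh => by
      simp_rw [hq, ← mul_sum]
      rw [sum_comm]
      simp [← funext_iff, hp1]
    simp only [hmass, sum_const, card_univ, nsmul_eq_mul]
    field_simp
  set F := fun z : Hfam × (Fin T → Fin M) => (z.1, (Set.Iio i).domRestrict z.2)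
  set pre := (Set.Iio i).domRestrict (π := fun _ => Fin N)
  have hcp : ∀ z, (∑ v, qLeVal i z.1 z.2 v ^ 2) / qLt i z.1 z.2 ^ 2 =
      cpGiven (jointMass q F fun z => z.2 i) (F z) := fun ⟨hh, y⟩ => by
    simp only [cpGiven, F, jointMass_prod_fst]
    rw [sum_jointMass_domRestrict_Iio]
    simp only [jointMass_domRestrict_Iio, hqLeVal, hqLt]
  have hblock' : ∀ x, ∑ u, jointMass p pre (fun x => x i) (pre x) u ≠ 0 →
      cpGiven (jointMass p pre fun x => x i) (pre x) ≤ 1 / K := fun x => by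
    rw [cpGiven, sum_jointMass_domRestrict_Iio, ← hmargLt]
    simp only [pre, jointMass_domRestrict_Iio, ← hmargLeVal]
    exact hblock i x
  calc _ = condCollision (jointMass q F fun z => z.2 i) := by
        simp_rw [hcp]
        exact sum_mul_cpGiven_jointMass q F _
    _ ≤ condCollision (jointMass p pre fun x => x i) + 1 / M * ∑ x, p x :=
        condCollision_hash_domRestrict_Iio_le hash (by positivity) huniv hp0 q hq i
    _ ≤ 1 / K * ∑ x, p x + 1 / M * ∑ x, p x := by
        gcongr
        exact condCollision_jointMass_le hp0 _ _ hblock'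
    _ = 1 / M + 1 / K := by rw [hp1]; ring

/-- for a random 2-universal hash function `H` and a block
`K`-source `X`, with `Y_i = H(X_i)`, we have `cp(H) = 1/|𝓗|` and
`cp(Y_i | H, Y_{<i}) ≤ 1/M + 1/K` for every `i`. -/
theorem stmt9 {N M T : ℕ} (hM : 0 < M) {Hfam : Type} [Fintype Hfam] [Nonempty Hfam]
    (hash : Hfam → Fin N → Fin M)
    (huniv : ∀ x x' : Fin N, x ≠ x' →
      (∑ hh : Hfam, if hash hh x = hash hh x' then (1 : ℝ) else 0)
        / Fintype.card Hfam ≤ 1 / M)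
    (p : (Fin T → Fin N) → ℝ) (hp0 : ∀ x, 0 ≤ p x) (hp1 : ∑ x, p x = 1)
    (K : ℝ) (hK : 0 < K)
    -- `margLt i x` = Pr[X_{<i} = x_{<i}]
    (margLt : Fin T → (Fin T → Fin N) → ℝ)
    (hmargLt : ∀ i x, margLt i x =
      ∑ y, if (∀ j, j < i → y j = x j) then p y else 0)
    -- `margLeVal i x v` = Pr[X_{<i} = x_{<i} ∧ X_i = v]
    (margLeVal : Fin T → (Fin T → Fin N) → Fin N → ℝ)
    (hmargLeVal : ∀ i x v, margLeVal i x v =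
      ∑ y, if (∀ j, j < i → y j = x j) ∧ y i = v then p y else 0)
    -- block `K`-source
    (hblock : ∀ i x, margLt i x ≠ 0 →
      (∑ v, (margLeVal i x v) ^ 2) / (margLt i x) ^ 2 ≤ 1 / K)
    -- joint distribution of `(H, Y_1, ..., Y_T)`
    (q : Hfam × (Fin T → Fin M) → ℝ)
    (hq : ∀ hh y, q (hh, y) = (1 / Fintype.card Hfam : ℝ) *
      ∑ x, if (∀ i, hash hh (x i) = y i) then p x else 0)
    -- `qLt i hh y` = Pr[H = hh ∧ Y_{<i} = y_{<i}]
    (qLt : Fin T → Hfam → (Fin T → Fin M) → ℝ)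
    (hqLt : ∀ i hh y, qLt i hh y =
      ∑ y', if (∀ j, j < i → y' j = y j) then q (hh, y') else 0)
    -- `qLeVal i hh y v` = Pr[H = hh ∧ Y_{<i} = y_{<i} ∧ Y_i = v]
    (qLeVal : Fin T → Hfam → (Fin T → Fin M) → Fin M → ℝ)
    (hqLeVal : ∀ i hh y v, qLeVal i hh y v =
      ∑ y', if (∀ j, j < i → y' j = y j) ∧ y' i = v then q (hh, y') else 0) :
    (∑ hh : Hfam, (∑ y, q (hh, y)) ^ 2 = 1 / Fintype.card Hfam) ∧
    ∀ i, ∑ z : Hfam × (Fin T → Fin M),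
        q z * ((∑ v, (qLeVal i z.1 z.2 v) ^ 2) / (qLt i z.1 z.2) ^ 2)
      ≤ 1 / M + 1 / K :=
  stmt9_general hash huniv p hp0 hp1 K margLt hmargLt margLeVal hmargLeVal hblock q hq qLt hqLt
    qLeVal hqLeVal
end
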